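/- Let ρ = (1/2)(I + r₁σ₁ + r₂σ₂ + r₃σ₃) be a single-qubit density matrix, where σ₁, σ₂, σ₃ are the Pauli matrices and r₁² + r₂² + r₃² ≤ 1. Then the modified trace distance measure of coherence of ρ equals √(r₁² + r₂²), i.e., the infimum over all λ ≥ 0 and all 2×2 diagonal density matrices δ of ‖ρ − λδ‖_tr equals √(r₁² + r₂²). -/

import Mathlib

open Matrix
open scoped ComplexOrder

/-- The trace norm of a matrix `A`: `‖A‖_tr = Tr √(AᴴA)`. -/
noncomputable def traceNorm {d : ℕ} (A : Matrix (Fin d) (Fin d) ℂ) : ℝ :=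
  (((Matrix.isHermitian_conjTranspose_mul_self A).eigenvectorUnitary : Matrix (Fin d) (Fin d) ℂ) *
    Matrix.diagonal ((fun x : ℝ => ((Real.sqrt x : ℝ) : ℂ)) ∘
      (Matrix.isHermitian_conjTranspose_mul_self A).eigenvalues) *
    (star (Matrix.isHermitian_conjTranspose_mul_self A).eigenvectorUnitary :
      Matrix (Fin d) (Fin d) ℂ)).trace.re


/-- The Pauli matrices. -/
noncomputable def σ1 : Matrix (Fin 2) (Fin 2) ℂ := !![0, 1; 1, 0]
noncomputable def σ2 : Matrix (Fin 2) (Fin 2) ℂ := !![0, -Complex.I; Complex.I, 0]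
noncomputable def σ3 : Matrix (Fin 2) (Fin 2) ℂ := !![1, 0; 0, -1]

/-
For a 2 × 2 matrix with singular values `s₁, s₂` we have `s₁² + s₂² = Tr (AᴴA)` and
`s₁ s₂ = |det A|`, so `‖A‖_tr² = Tr (AᴴA) + 2 |det A|`. Bounding `|det A| ≥ |b c| - |a d|`
gives `‖A‖_tr ≥ |A₀₁| + |A₁₀|`, with equality when the diagonal of `A` vanishes. Subtracting
a diagonal matrix leaves the off-diagonal entries unchanged, so the infimum defining the
coherence is attained at `λ δ = diag ρ` (an incoherent state since `|r₃| ≤ 1`), and equals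
`|ρ₀₁| + |ρ₁₀| = √(r₁² + r₂²)`.
-/

open scoped MatrixOrder

theorem Matrix.det_abs {n : Type*} [Fintype n] [DecidableEq n] (A : Matrix n n ℂ) :
    (CFC.abs A).det = ‖A.det‖ := by
  have hA := posSemidef_conjTranspose_mul_self A
  rw [CFC.abs, star_eq_conjTranspose, hA.det_sqrt, RCLike.sqrt_of_nonneg hA.det_nonneg, det_mul,
    det_conjTranspose, Complex.star_def, Complex.conj_mul']
  simp [← Complex.ofReal_pow]

theorem Matrix.trace_sq_fin_two {R : Type*} [CommRing R] (B : Matrix (Fin 2) (Fin 2) R) :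
    B.trace ^ 2 = (B * B).trace + 2 * B.det := by
  simp only [trace_fin_two, det_fin_two, mul_apply, Fin.sum_univ_two]
  ring

theorem Matrix.re_trace_conjTranspose_mul_self_fin_two (A : Matrix (Fin 2) (Fin 2) ℂ) :
    (Aᴴ * A).trace.re =
      ‖A 0 0‖ ^ 2 + ‖A 0 1‖ ^ 2 + ‖A 1 0‖ ^ 2 + ‖A 1 1‖ ^ 2 := by
  simp only [trace_fin_two, mul_apply, Fin.sum_univ_two, conjTranspose_apply, Complex.star_def,
    Complex.conj_mul']
  norm_cast
  ring

section traceNorm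

variable {d : ℕ} (A : Matrix (Fin d) (Fin d) ℂ)

theorem traceNorm_eq_re_trace_abs : traceNorm A = (CFC.abs A).trace.re := by
  have hA := posSemidef_conjTranspose_mul_self A
  rw [CFC.abs, star_eq_conjTranspose, CFC.sqrt_eq_cfc, cfc_nnreal_eq_real _ _ hA.nonneg,
    hA.isHermitian.cfc_eq]
  simp only [IsHermitian.cfc, Unitary.conjStarAlgAut_apply, Real.coe_sqrt, traceNorm]
  congr 5
  ext i
  simp [hA.eigenvalues_nonneg i]

theorem ofReal_traceNorm : (traceNorm A : ℂ) = (CFC.abs A).trace := by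
  obtain ⟨-, him⟩ := Complex.nonneg_iff.mp (CFC.abs_nonneg A).posSemidef.trace_nonneg
  rw [traceNorm_eq_re_trace_abs]
  exact Complex.ext rfl him

theorem traceNorm_nonneg : 0 ≤ traceNorm A := by
  rw [traceNorm_eq_re_trace_abs]
  exact (Complex.nonneg_iff.mp (CFC.abs_nonneg A).posSemidef.trace_nonneg).1

end traceNorm

theorem traceNorm_sq_fin_two (A : Matrix (Fin 2) (Fin 2) ℂ) :
    traceNorm A ^ 2 = (Aᴴ * A).trace.re + 2 * ‖A.det‖ := by
  have h := congrArg Complex.re (trace_sq_fin_two (CFC.abs A))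
  rw [← ofReal_traceNorm, CFC.abs_mul_abs, det_abs, ← Complex.ofReal_pow, Complex.ofReal_re,
    star_eq_conjTranspose, Complex.add_re] at h
  simpa using h

theorem norm_add_norm_le_traceNorm (A : Matrix (Fin 2) (Fin 2) ℂ) :
    ‖A 0 1‖ + ‖A 1 0‖ ≤ traceNorm A := by
  refine (pow_le_pow_iff_left₀ (by positivity) (traceNorm_nonneg A) two_ne_zero).mp ?_
  have hdet : ‖A 0 1‖ * ‖A 1 0‖ - ‖A 0 0‖ * ‖A 1 1‖ ≤ ‖A.det‖ := by
    rw [det_fin_two, ← norm_mul, ← norm_mul, norm_sub_rev]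
    exact norm_sub_norm_le _ _
  rw [traceNorm_sq_fin_two, re_trace_conjTranspose_mul_self_fin_two]
  -- `‖A‖_tr² ≥ (‖A 0 0‖ - ‖A 1 1‖)² + (‖A 0 1‖ + ‖A 1 0‖)²`
  nlinarith [sq_nonneg (‖A 0 0‖ - ‖A 1 1‖)]

theorem traceNorm_of_diag_eq_zero {A : Matrix (Fin 2) (Fin 2) ℂ} (h₀ : A 0 0 = 0)
    (h₁ : A 1 1 = 0) :
    traceNorm A = ‖A 0 1‖ + ‖A 1 0‖ := by
  refine (pow_left_inj₀ (traceNorm_nonneg A) (by positivity) two_ne_zero).mp ?_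
  rw [traceNorm_sq_fin_two, re_trace_conjTranspose_mul_self_fin_two, det_fin_two, h₀, h₁]
  simp only [norm_zero, zero_mul, zero_sub, norm_neg, norm_mul]
  ring

theorem norm_add_norm_le_traceNorm_sub_of_isDiag (A : Matrix (Fin 2) (Fin 2) ℂ)
    {D : Matrix (Fin 2) (Fin 2) ℂ} (hD : D.IsDiag) :
    ‖A 0 1‖ + ‖A 1 0‖ ≤ traceNorm (A - D) := by
  simpa [hD (i := 0) (j := 1) (by decide), hD (i := 1) (j := 0) (by decide)] using
    norm_add_norm_le_traceNorm (A - D)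

theorem traceNorm_sub_diagonal_diag (A : Matrix (Fin 2) (Fin 2) ℂ) :
    traceNorm (A - diagonal A.diag) = ‖A 0 1‖ + ‖A 1 0‖ := by
  simpa using traceNorm_of_diag_eq_zero (A := A - diagonal A.diag) (by simp) (by simp)

theorem half_smul_one_add_pauli (r₁ r₂ r₃ : ℝ) :
    ((1 : ℝ) / 2) • (1 + r₁ • σ1 + r₂ • σ2 + r₃ • σ3) =
      !![(((1 + r₃) / 2 : ℝ) : ℂ), (r₁ - r₂ * Complex.I) / 2;
        (r₁ + r₂ * Complex.I) / 2, (((1 - r₃) / 2 : ℝ) : ℂ)] := by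
  ext i j
  fin_cases i <;> fin_cases j <;> simp [σ1, σ2, σ3, one_apply] <;> ring

/-- For a single-qubit state with Bloch vector `(r₁, r₂, r₃)`, the modified trace
distance measure of coherence equals `√(r₁² + r₂²)`. -/
theorem modified_trace_coherence_qubit (r₁ r₂ r₃ : ℝ)
    (hr : r₁ ^ 2 + r₂ ^ 2 + r₃ ^ 2 ≤ 1)
    (ρ : Matrix (Fin 2) (Fin 2) ℂ)
    (hρ : ρ = ((1 : ℝ) / 2) • (1 + r₁ • σ1 + r₂ • σ2 + r₃ • σ3)) :
    sInf {x : ℝ | ∃ (l : ℝ) (δ : Matrix (Fin 2) (Fin 2) ℂ),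
        0 ≤ l ∧ δ.PosSemidef ∧ δ.trace = 1 ∧ δ.IsDiag ∧
        x = traceNorm (ρ - l • δ)} = Real.sqrt (r₁ ^ 2 + r₂ ^ 2) := by
  rw [half_smul_one_add_pauli] at hρ
  have hcoh : ‖ρ 0 1‖ + ‖ρ 1 0‖ = √(r₁ ^ 2 + r₂ ^ 2) := by
    have hconj : ρ 0 1 = starRingEnd ℂ (ρ 1 0) := by simp [hρ, sub_eq_add_neg, map_ofNat]
    rw [hconj, Complex.norm_conj, hρ]
    simp only [of_apply, cons_val', cons_val_zero, cons_val_one, empty_val', cons_val_fin_one,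
      norm_div, Complex.norm_add_mul_I, Complex.norm_two]
    ring
  have hpsd : (diagonal ρ.diag).PosSemidef := by
    have hr₃ : |r₃| ≤ 1 := (sq_le_one_iff_abs_le_one r₃).mp (by nlinarith)
    refine posSemidef_diagonal_iff.mpr fun i => ?_
    fin_cases i <;> rw [hρ] <;> exact Complex.zero_le_real.mpr (by linarith [abs_le.mp hr₃])
  have htrace : (diagonal ρ.diag).trace = 1 := by
    simp [hρ, trace_diagonal]
    ring
  refine IsLeast.csInf_eq
    ⟨⟨1, diagonal ρ.diag, zero_le_one, hpsd, htrace, isDiag_diagonal _, ?_⟩, ?_⟩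
  · rw [one_smul, traceNorm_sub_diagonal_diag, hcoh]
  · rintro _ ⟨l, δ, -, -, -, hδ, rfl⟩
    exact hcoh ▸ norm_add_norm_le_traceNorm_sub_of_isDiag ρ (hδ.smul l)
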